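/- arXiv:1502.06895 — 5 statements merged into one kernel-verified Lean document; each statement's English description precedes it below -/
import Mathlib

section
/- Let Φ be a p×p symmetric matrix with Φ_ii = 1 for all i and |Φ_ij| < c/(2s) for all i ≠ j, where 0 ≤ c < 1 and s ≥ 1. Then Φ is restricted diagonally dominant with sparsity s and constant C₀ = 1/c; more precisely, for every I ⊆ {1,...,p} with |I| ≤ s−1 and distinct i,k ∉ I, Φ_ii − (1/c)·max{Σ_{j∈I}|Φ_ij+Φ_kj|, Σ_{j∈I}|Φ_ij−Φ_kj|} − |Φ_ik| ≥ 1/(2s) > 0. -/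
open Finset Matrix

/-- `M` is restricted diagonally dominant with sparsity `s` and constant `C₀`. -/
def IsRDD {p : ℕ} (M : Matrix (Fin p) (Fin p) ℝ) (s : ℕ) (C₀ : ℝ) : Prop :=
  ∀ I : Finset (Fin p), I.card ≤ s - 1 →
    ∀ i k : Fin p, i ∉ I → k ∉ I → k ≠ i →
      C₀ * max (∑ j ∈ I, |M i j + M k j|) (∑ j ∈ I, |M i j - M k j|) + |M i k| < M i i

lemma stmt4_aux {p s : ℕ} (hs : 1 ≤ s) (Φ : Matrix (Fin p) (Fin p) ℝ)
    (c : ℝ) (hc0 : 0 ≤ c) (hc1 : c < 1)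
    (hdiag : ∀ i, Φ i i = 1) (hoff : ∀ i j, i ≠ j → |Φ i j| < c / (2 * s)) :
    ∀ I : Finset (Fin p), I.card ≤ s - 1 →
      ∀ i k : Fin p, i ∉ I → k ∉ I → k ≠ i →
        1 / (2 * s) ≤ Φ i i
          - (1 / c) * max (∑ j ∈ I, |Φ i j + Φ k j|) (∑ j ∈ I, |Φ i j - Φ k j|)
          - |Φ i k| := by
  intro I hI i k hiI hkI hki
  have hs' : (1:ℝ) ≤ (s:ℝ) := by exact_mod_cast hs
  have hspos : (0:ℝ) < (s:ℝ) := by linarith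
  rcases eq_or_lt_of_le hc0 with h0 | hcpos
  · exfalso
    have := hoff i k hki.symm
    rw [← h0] at this
    simp only [zero_div] at this
    linarith [abs_nonneg (Φ i k)]
  · have hcs : c / (2*s) + c / (2*s) = c / s := by field_simp; ring
    have hbound1 : ∀ j ∈ I, |Φ i j + Φ k j| ≤ c / s := by
      intro j hj
      have hij : i ≠ j := fun h => hiI (h ▸ hj)
      have hkj : k ≠ j := fun h => hkI (h ▸ hj)
      have h1 := hoff i j hij
      have h2 := hoff k j hkj
      have := abs_add_le (Φ i j) (Φ k j)
      linarith
    have hbound2 : ∀ j ∈ I, |Φ i j - Φ k j| ≤ c / s := by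
      intro j hj
      have hij : i ≠ j := fun h => hiI (h ▸ hj)
      have hkj : k ≠ j := fun h => hkI (h ▸ hj)
      have h1 := hoff i j hij
      have h2 := hoff k j hkj
      have := abs_sub (Φ i j) (Φ k j)
      linarith
    have hcard : (I.card : ℝ) ≤ (s:ℝ) - 1 := by
      have : (I.card : ℝ) ≤ ((s - 1 : ℕ) : ℝ) := by exact_mod_cast hI
      rwa [Nat.cast_sub hs, Nat.cast_one] at this
    have hcsnn : (0:ℝ) ≤ c / s := by positivity
    have hsum1 : ∑ j ∈ I, |Φ i j + Φ k j| ≤ ((s:ℝ) - 1) * (c / s) := by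
      calc ∑ j ∈ I, |Φ i j + Φ k j| ≤ ∑ _j ∈ I, (c / s) := Finset.sum_le_sum hbound1
        _ = (I.card : ℝ) * (c / s) := by rw [Finset.sum_const, nsmul_eq_mul]
        _ ≤ ((s:ℝ) - 1) * (c / s) := by nlinarith
    have hsum2 : ∑ j ∈ I, |Φ i j - Φ k j| ≤ ((s:ℝ) - 1) * (c / s) := by
      calc ∑ j ∈ I, |Φ i j - Φ k j| ≤ ∑ _j ∈ I, (c / s) := Finset.sum_le_sum hbound2
        _ = (I.card : ℝ) * (c / s) := by rw [Finset.sum_const, nsmul_eq_mul]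
        _ ≤ ((s:ℝ) - 1) * (c / s) := by nlinarith
    have hmax : max (∑ j ∈ I, |Φ i j + Φ k j|) (∑ j ∈ I, |Φ i j - Φ k j|)
        ≤ ((s:ℝ) - 1) * (c / s) := max_le hsum1 hsum2
    have hA : (1 / c) * max (∑ j ∈ I, |Φ i j + Φ k j|) (∑ j ∈ I, |Φ i j - Φ k j|)
        ≤ (1:ℝ) - 1 / s := by
      have h1 : (1 / c) * max (∑ j ∈ I, |Φ i j + Φ k j|) (∑ j ∈ I, |Φ i j - Φ k j|)
          ≤ (1 / c) * (((s:ℝ) - 1) * (c / s)) :=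
        mul_le_mul_of_nonneg_left hmax (by positivity)
      have h2 : (1 / c) * (((s:ℝ) - 1) * (c / s)) = 1 - 1 / s := by
        field_simp
      linarith
    have hB : |Φ i k| ≤ 1 / (2 * s) := by
      have h1 := hoff i k hki.symm
      have h2 : c / (2 * s) ≤ 1 / (2 * s) := by gcongr
      linarith
    have hhalf : (1:ℝ) / (s:ℝ) = 2 * (1 / (2 * (s:ℝ))) := by field_simp
    rw [hdiag i]
    linarith

theorem stmt4 {p s : ℕ} (hs : 1 ≤ s) (Φ : Matrix (Fin p) (Fin p) ℝ) (hsym : Φ.IsSymm)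
    (c : ℝ) (hc0 : 0 ≤ c) (hc1 : c < 1)
    (hdiag : ∀ i, Φ i i = 1) (hoff : ∀ i j, i ≠ j → |Φ i j| < c / (2 * s)) :
    IsRDD Φ s (1 / c) ∧
    ∀ I : Finset (Fin p), I.card ≤ s - 1 →
      ∀ i k : Fin p, i ∉ I → k ∉ I → k ≠ i →
        1 / (2 * s) ≤ Φ i i
          - (1 / c) * max (∑ j ∈ I, |Φ i j + Φ k j|) (∑ j ∈ I, |Φ i j - Φ k j|)
          - |Φ i k| := by
  have haux := stmt4_aux hs Φ c hc0 hc1 hdiag hoff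
  refine ⟨?_, haux⟩
  intro I hI i k hiI hkI hki
  have h := haux I hI i k hiI hkI hki
  have hs' : (1:ℝ) ≤ (s:ℝ) := by exact_mod_cast hs
  have hpos : (0:ℝ) < 1 / (2 * s) := by positivity
  linarith
end

section
/- Let Φ be a p×p symmetric matrix with Φ_ii = 1 for all i and |Φ_ij| < r^{|i−j|} for all i ≠ j, where 0 < r < 1. Then for every i, Σ_{j≠i}|Φ_ij| < 2r/(1−r), and consequently Φ is restricted diagonally dominant with any sparsity s and constant C₀ = (1−r)²/(4r): for every I with |I| ≤ s−1 and distinct i,k ∉ I, Φ_ii > ((1−r)²/(4r))·max{Σ_{j∈I}|Φ_ij+Φ_kj|, Σ_{j∈I}|Φ_ij−Φ_kj|} + |Φ_ik|. -/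
open Finset Matrix

private lemma geomAux (r : ℝ) (hr0 : 0 < r) (hr1 : r < 1) {p : ℕ} (S : Finset ℕ)
    (hS : ∀ m ∈ S, 1 ≤ m ∧ m ≤ p) : ∑ m ∈ S, r ^ m ≤ r / (1 - r) := by
  have h1r : 0 < 1 - r := by linarith
  have hsub : S ⊆ (Finset.range p).image (· + 1) := by
    intro m hm
    obtain ⟨h1, h2⟩ := hS m hm
    simp only [Finset.mem_image, Finset.mem_range]
    exact ⟨m - 1, by omega, by omega⟩
  have hgeom : ∑ n ∈ Finset.range p, r ^ n ≤ (1 - r)⁻¹ := by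
    rw [geom_sum_eq hr1.ne, div_le_iff_of_neg (by linarith : r - 1 < 0)]
    have h1 : (1 - r)⁻¹ * (r - 1) = -1 := by field_simp; ring
    have h2 : 0 ≤ r ^ p := by positivity
    linarith
  calc ∑ m ∈ S, r ^ m ≤ ∑ m ∈ (Finset.range p).image (· + 1), r ^ m :=
        Finset.sum_le_sum_of_subset_of_nonneg hsub (fun _ _ _ => by positivity)
    _ = ∑ n ∈ Finset.range p, r ^ (n + 1) :=
        Finset.sum_image (by intro a _ b _ h; simp only at h; omega)
    _ = r * ∑ n ∈ Finset.range p, r ^ n := by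
        rw [Finset.mul_sum]; exact Finset.sum_congr rfl (fun n _ => by ring)
    _ ≤ r * (1 - r)⁻¹ := mul_le_mul_of_nonneg_left hgeom hr0.le
    _ = r / (1 - r) := (div_eq_mul_inv r (1 - r)).symm

private lemma distSum (r : ℝ) (hr0 : 0 < r) (hr1 : r < 1) {p : ℕ} (i : Fin p) :
    ∑ j ∈ Finset.univ.erase i, r ^ |(i : ℤ) - (j : ℤ)|.toNat ≤ 2 * r / (1 - r) := by
  have h1r : 0 < 1 - r := by linarith
  set d : Fin p → ℕ := fun j => |(i : ℤ) - (j : ℤ)|.toNat with hd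
  have hsplit := Finset.sum_filter_add_sum_filter_not (Finset.univ.erase i)
    (fun j => (j : ℕ) < (i : ℕ)) (fun j => r ^ d j)
  have hbound : ∀ (A : Finset (Fin p)), (∀ a ∈ A, a ≠ i) →
      (∀ a ∈ A, ∀ b ∈ A, d a = d b → a = b) → ∑ j ∈ A, r ^ d j ≤ r / (1 - r) := by
    intro A hne hinj
    have : ∑ j ∈ A, r ^ d j = ∑ m ∈ A.image d, r ^ m :=
      (Finset.sum_image (fun a ha b hb h => hinj a ha b hb h)).symm
    rw [this]
    refine geomAux r hr0 hr1 (p := p) _ ?_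
    intro m hm
    obtain ⟨a, ha, rfl⟩ := Finset.mem_image.mp hm
    have hdne : (i : ℤ) ≠ (a : ℤ) := by
      intro h; exact hne a ha (Fin.ext (by omega))
    constructor
    · have h0 : 0 < |(i : ℤ) - (a : ℤ)| := abs_pos.mpr (sub_ne_zero.mpr hdne)
      simp only [hd]; omega
    · have hi := i.isLt
      have haa := a.isLt
      have hle : |(i : ℤ) - (a : ℤ)| ≤ p := by
        rw [abs_sub_le_iff]; omega
      simp only [hd]; omega
  have hA := hbound ((Finset.univ.erase i).filter (fun j => (j : ℕ) < (i : ℕ)))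
    (fun a ha => Finset.ne_of_mem_erase (Finset.mem_of_mem_filter a ha))
    (by
      intro a ha b hb h
      simp only [Finset.mem_filter] at ha hb
      have h1 := ha.2; have h2 := hb.2
      simp only [hd] at h
      have : |(i : ℤ) - (a : ℤ)| = (i : ℤ) - a := by rw [abs_of_nonneg]; omega
      have hb' : |(i : ℤ) - (b : ℤ)| = (i : ℤ) - b := by rw [abs_of_nonneg]; omega
      apply Fin.ext; omega)
  have hB := hbound ((Finset.univ.erase i).filter (fun j => ¬ (j : ℕ) < (i : ℕ)))
    (fun a ha => Finset.ne_of_mem_erase (Finset.mem_of_mem_filter a ha))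
    (by
      intro a ha b hb h
      simp only [Finset.mem_filter, Finset.mem_erase] at ha hb
      have h1 := ha.2; have h2 := hb.2
      have ha3 : (a : ℕ) ≠ (i : ℕ) := fun hh => ha.1.1 (Fin.ext hh)
      have hb3 : (b : ℕ) ≠ (i : ℕ) := fun hh => hb.1.1 (Fin.ext hh)
      simp only [hd] at h
      have : |(i : ℤ) - (a : ℤ)| = (a : ℤ) - i := by rw [abs_of_nonpos] <;> omega
      have hb' : |(i : ℤ) - (b : ℤ)| = (b : ℤ) - i := by rw [abs_of_nonpos] <;> omega
      apply Fin.ext; omega)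
  have : 2 * r / (1 - r) = r / (1 - r) + r / (1 - r) := by ring
  rw [this, ← hsplit]
  exact add_le_add hA hB

private lemma rowSum {p : ℕ} (Φ : Matrix (Fin p) (Fin p) ℝ)
    (r : ℝ) (hr0 : 0 < r) (hr1 : r < 1)
    (hoff : ∀ i j : Fin p, i ≠ j → |Φ i j| < r ^ |(i : ℤ) - (j : ℤ)|.toNat) (i : Fin p) :
    ∑ j ∈ Finset.univ.erase i, |Φ i j| < 2 * r / (1 - r) := by
  have h1r : 0 < 1 - r := by linarith
  rcases (Finset.univ.erase i).eq_empty_or_nonempty with h | h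
  · rw [h, Finset.sum_empty]; positivity
  · calc ∑ j ∈ Finset.univ.erase i, |Φ i j|
        < ∑ j ∈ Finset.univ.erase i, r ^ |(i : ℤ) - (j : ℤ)|.toNat :=
          Finset.sum_lt_sum_of_nonempty h
            (fun j hj => hoff i j (Finset.ne_of_mem_erase hj).symm)
      _ ≤ 2 * r / (1 - r) := distSum r hr0 hr1 i

theorem stmt5 {p : ℕ} (Φ : Matrix (Fin p) (Fin p) ℝ) (hsym : Φ.IsSymm)
    (r : ℝ) (hr0 : 0 < r) (hr1 : r < 1)
    (hdiag : ∀ i, Φ i i = 1)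
    (hoff : ∀ i j : Fin p, i ≠ j → |Φ i j| < r ^ |(i : ℤ) - (j : ℤ)|.toNat) :
    (∀ i : Fin p, ∑ j ∈ Finset.univ.erase i, |Φ i j| < 2 * r / (1 - r)) ∧
    ∀ s : ℕ, IsRDD Φ s ((1 - r) ^ 2 / (4 * r)) := by
  have h1r : 0 < 1 - r := by linarith
  have hrow := rowSum Φ r hr0 hr1 hoff
  refine ⟨hrow, ?_⟩
  intro s I hI i k hiI hkI hki
  -- partial row sums over I
  have hpart : ∀ a : Fin p, a ∉ I → ∑ j ∈ I, |Φ a j| < 2 * r / (1 - r) := by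
    intro a ha
    refine lt_of_le_of_lt ?_ (hrow a)
    refine Finset.sum_le_sum_of_subset_of_nonneg ?_ (fun _ _ _ => abs_nonneg _)
    intro j hj
    exact Finset.mem_erase.mpr ⟨fun hh => ha (hh ▸ hj), Finset.mem_univ j⟩
  have hsum1 := hpart i hiI
  have hsum2 := hpart k hkI
  have hplus : ∑ j ∈ I, |Φ i j + Φ k j| < 4 * r / (1 - r) := by
    have : ∑ j ∈ I, |Φ i j + Φ k j| ≤ ∑ j ∈ I, |Φ i j| + ∑ j ∈ I, |Φ k j| := by
      rw [← Finset.sum_add_distrib]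
      exact Finset.sum_le_sum (fun j _ => abs_add_le _ _)
    have h4 : 4 * r / (1 - r) = 2 * r / (1 - r) + 2 * r / (1 - r) := by ring
    linarith
  have hminus : ∑ j ∈ I, |Φ i j - Φ k j| < 4 * r / (1 - r) := by
    have : ∑ j ∈ I, |Φ i j - Φ k j| ≤ ∑ j ∈ I, |Φ i j| + ∑ j ∈ I, |Φ k j| := by
      rw [← Finset.sum_add_distrib]
      exact Finset.sum_le_sum (fun j _ => abs_sub _ _)
    have h4 : 4 * r / (1 - r) = 2 * r / (1 - r) + 2 * r / (1 - r) := by ring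
    linarith
  have hmax : max (∑ j ∈ I, |Φ i j + Φ k j|) (∑ j ∈ I, |Φ i j - Φ k j|) < 4 * r / (1 - r) :=
    max_lt hplus hminus
  have hC0 : 0 < (1 - r) ^ 2 / (4 * r) := by positivity
  have hmul : (1 - r) ^ 2 / (4 * r) *
      max (∑ j ∈ I, |Φ i j + Φ k j|) (∑ j ∈ I, |Φ i j - Φ k j|) < 1 - r := by
    have := mul_lt_mul_of_pos_left hmax hC0
    have heq : (1 - r) ^ 2 / (4 * r) * (4 * r / (1 - r)) = 1 - r := by
      field_simp
    rw [heq] at this; linarith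
  have hik : |Φ i k| < r := by
    have hne : i ≠ k := fun h => hki h.symm
    have h1 := hoff i k hne
    have hn : |(i : ℤ) - (k : ℤ)|.toNat ≠ 0 := by
      have hz : (i : ℤ) ≠ (k : ℤ) := by
        intro h; exact hne (Fin.ext (by omega))
      have h0 : 0 < |(i : ℤ) - (k : ℤ)| := abs_pos.mpr (sub_ne_zero.mpr hz)
      omega
    have h2 : r ^ |(i : ℤ) - (k : ℤ)|.toNat ≤ r := pow_le_of_le_one hr0.le hr1.le hn
    linarith
  rw [hdiag i]
  linarith
end

section
/- Let Φ be a p×p symmetric matrix with Φ_ii = 1 for all i and |Φ_ij| < r for all i ≠ j, with 0 < r < 1, and suppose p ≥ 3. If Φ is restricted diagonally dominant with sparsity 2 and constant C₀ ≥ ρ ≥ 1, then for every S = {a,b} with a ≠ b and every sign vector σ ∈ {−1,1}^S, ‖Φ_{S^c,S} Φ_{S,S}^{−1} σ‖_∞ ≤ ρ^{−1}/(1−r). -/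
open Finset Matrix

theorem stmt6 {p : ℕ} (hp : 3 ≤ p) (Φ : Matrix (Fin p) (Fin p) ℝ) (hsym : Φ.IsSymm)
    (r ρ C₀ : ℝ) (hr0 : 0 < r) (hr1 : r < 1) (hρ : 1 ≤ ρ) (hC₀ : ρ ≤ C₀)
    (hdiag : ∀ i, Φ i i = 1) (hoff : ∀ i j : Fin p, i ≠ j → |Φ i j| < r)
    (hRDD : IsRDD Φ 2 C₀) :
    ∀ a b : Fin p, a ≠ b → ∀ σ : Fin 2 → ℝ, (∀ m, σ m = 1 ∨ σ m = -1) →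
      ∀ k : Fin p, k ≠ a → k ≠ b →
        |![Φ k a, Φ k b] ⬝ᵥ (!![Φ a a, Φ a b; Φ b a, Φ b b])⁻¹.mulVec σ|
          ≤ ρ⁻¹ / (1 - r) := by
  intro a b hab σ hσ k hka hkb
  have hba : Φ b a = Φ a b := hsym.apply a b
  have hak : Φ a k = Φ k a := hsym.apply k a
  have hbk : Φ b k = Φ k b := hsym.apply k b
  set c := Φ a b with hc
  have hcr := abs_lt.mp (hoff a b hab)
  have hC0pos : (0:ℝ) < C₀ := lt_of_lt_of_le (lt_of_lt_of_le one_pos hρ) hC₀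
  have hρpos : (0:ℝ) < ρ := lt_of_lt_of_le one_pos hρ
  -- key bound from RDD with I = {k}
  have hkey := hRDD {k} (by simp) a b (by simp [Ne.symm hka]) (by simp [Ne.symm hkb]) (Ne.symm hab)
  simp only [Finset.sum_singleton, hdiag a] at hkey
  have hMnn : (0:ℝ) ≤ max |Φ a k + Φ b k| |Φ a k - Φ b k| :=
    le_max_of_le_left (abs_nonneg _)
  have hM : max |Φ a k + Φ b k| |Φ a k - Φ b k| ≤ ρ⁻¹ := by
    rw [inv_eq_one_div, le_div_iff₀ hρpos]
    nlinarith [mul_le_mul_of_nonneg_right hC₀ hMnn, abs_nonneg (Φ a b)]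
  have h1 : |Φ k a + Φ k b| ≤ ρ⁻¹ := by
    rw [← hak, ← hbk]; exact le_trans (le_max_left _ _) hM
  have h2 : |Φ k a - Φ k b| ≤ ρ⁻¹ := by
    rw [← hak, ← hbk]; exact le_trans (le_max_right _ _) hM
  have hd : (0:ℝ) < 1 - c * c := by nlinarith [hcr.1, hcr.2]
  have hinv : (!![Φ a a, Φ a b; Φ b a, Φ b b])⁻¹
      = (1 - c * c)⁻¹ • !![1, -c; -c, 1] := by
    rw [hdiag, hdiag, hba, ← hc]
    rw [Matrix.inv_def, Matrix.adjugate_fin_two, Matrix.det_fin_two_of,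
      Ring.inverse_eq_inv']
    norm_num
  rw [hinv]
  have hrpos : (0:ℝ) < 1 - r := by linarith
  have hρinn : (0:ℝ) ≤ ρ⁻¹ := by positivity
  have hplus : (0:ℝ) < 1 + c := by linarith [hcr.1]
  have hminus : (0:ℝ) < 1 - c := by linarith [hcr.2]
  have hrp : 1 - r ≤ 1 + c := by linarith [hcr.1]
  have hrm : 1 - r ≤ 1 - c := by linarith [hcr.2]
  have hexp : ![Φ k a, Φ k b] ⬝ᵥ ((1 - c * c)⁻¹ • !![1, -c; -c, 1]).mulVec σ
      = Φ k a * ((1 - c*c)⁻¹ * (σ 0 + -c * σ 1))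
        + Φ k b * ((1 - c*c)⁻¹ * (-c * σ 0 + σ 1)) := by
    simp [Matrix.mulVec, dotProduct, Fin.sum_univ_two, mul_add]
    ring
  rw [hexp]
  rcases hσ 0 with h0 | h0 <;> rcases hσ 1 with h1' | h1' <;> rw [h0, h1']
  · have heq : Φ k a * ((1 - c*c)⁻¹ * ((1:ℝ) + -c * 1))
        + Φ k b * ((1 - c*c)⁻¹ * (-c * 1 + 1)) = (Φ k a + Φ k b) / (1 + c) := by
      rw [eq_div_iff (ne_of_gt hplus)]
      linear_combination (Φ k a + Φ k b) * (mul_inv_cancel₀ (ne_of_gt hd))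
    rw [heq, abs_div, abs_of_pos hplus]
    exact div_le_div₀ hρinn h1 hrpos hrp
  · have heq : Φ k a * ((1 - c*c)⁻¹ * ((1:ℝ) + -c * (-1)))
        + Φ k b * ((1 - c*c)⁻¹ * (-c * 1 + (-1))) = (Φ k a - Φ k b) / (1 - c) := by
      rw [eq_div_iff (ne_of_gt hminus)]
      linear_combination (Φ k a - Φ k b) * (mul_inv_cancel₀ (ne_of_gt hd))
    rw [heq, abs_div, abs_of_pos hminus]
    exact div_le_div₀ hρinn h2 hrpos hrm
  · have heq : Φ k a * ((1 - c*c)⁻¹ * ((-1:ℝ) + -c * 1))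
        + Φ k b * ((1 - c*c)⁻¹ * (-c * (-1) + 1)) = -(Φ k a - Φ k b) / (1 - c) := by
      rw [eq_div_iff (ne_of_gt hminus)]
      linear_combination (-(Φ k a - Φ k b)) * (mul_inv_cancel₀ (ne_of_gt hd))
    rw [heq, abs_div, abs_neg, abs_of_pos hminus]
    exact div_le_div₀ hρinn h2 hrpos hrm
  · have heq : Φ k a * ((1 - c*c)⁻¹ * ((-1:ℝ) + -c * (-1)))
        + Φ k b * ((1 - c*c)⁻¹ * (-c * (-1) + (-1))) = -(Φ k a + Φ k b) / (1 + c) := by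
      rw [eq_div_iff (ne_of_gt hplus)]
      linear_combination (-(Φ k a + Φ k b)) * (mul_inv_cancel₀ (ne_of_gt hd))
    rw [heq, abs_div, abs_neg, abs_of_pos hplus]
    exact div_le_div₀ hρinn h1 hrpos hrp
end

section
/- Let Φ be a p×p symmetric matrix with Φ_ii = 1 for all i and |Φ_ij| < r for all i ≠ j, with 0 < r < 1 and 0 < θ < 1. Suppose that for every two-element set S = {a,b} and every sign vector σ ∈ {−1,1}^S, ‖Φ_{S^c,S} Φ_{S,S}^{−1} σ‖_∞ ≤ 1−θ. Then Φ is restricted diagonally dominant with sparsity 2 and constant C₀ = (1/(1−θ))·(1−r)/(1+r): for all i ≠ k and every singleton I = {j} with j ∉ {i,k}, Φ_ii > C₀·max{|Φ_ij+Φ_kj|, |Φ_ij−Φ_kj|} + |Φ_ik|. -/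
open Finset Matrix

theorem stmt7 {p : ℕ} (Φ : Matrix (Fin p) (Fin p) ℝ) (hsym : Φ.IsSymm)
    (r θ : ℝ) (hr0 : 0 < r) (hr1 : r < 1) (hθ0 : 0 < θ) (hθ1 : θ < 1)
    (hdiag : ∀ i, Φ i i = 1) (hoff : ∀ i j : Fin p, i ≠ j → |Φ i j| < r)
    (hIC : ∀ a b : Fin p, a ≠ b → ∀ σ : Fin 2 → ℝ, (∀ m, σ m = 1 ∨ σ m = -1) →
      ∀ k : Fin p, k ≠ a → k ≠ b →
        |![Φ k a, Φ k b] ⬝ᵥ (!![Φ a a, Φ a b; Φ b a, Φ b b])⁻¹.mulVec σ| ≤ 1 - θ) :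
    ∀ i k j : Fin p, i ≠ k → j ≠ i → j ≠ k →
      (1 / (1 - θ)) * ((1 - r) / (1 + r)) * max |Φ i j + Φ k j| |Φ i j - Φ k j|
        + |Φ i k| < Φ i i := by
  intro i k j hik hji hjk
  set a := Φ i j with ha
  set b := Φ k j with hb
  set c := Φ i k with hc
  have hcabs : |c| < r := hoff i k hik
  have hki : Φ k i = c := hsym.apply i k
  have hja : Φ j i = a := hsym.apply i j
  have hjb : Φ j k = b := hsym.apply k j
  have hc1 : -1 < c := by
    have := neg_abs_le c; linarith
  have hc2 : c < 1 := by
    have := le_abs_self c; linarith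
  have hdet : 1 - c * c > 0 := by nlinarith
  have hθ' : (0:ℝ) < 1 - θ := by linarith
  have h1c : (1:ℝ) + c ≠ 0 := by linarith
  have h1c' : (1:ℝ) - c ≠ 0 := by linarith
  have hdet' : 1 - c * c ≠ 0 := ne_of_gt hdet
  -- compute the inverse
  have hM : (!![Φ i i, Φ i k; Φ k i, Φ k k])⁻¹
      = (1 - c * c)⁻¹ • !![1, -c; -c, 1] := by
    rw [hdiag, hdiag, hki, Matrix.inv_def]
    rw [Matrix.det_fin_two_of, Matrix.adjugate_fin_two_of, Ring.inverse_eq_inv']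
    congr 1
    ring
  have h1 := hIC i k hik ![1, 1] (by intro m; fin_cases m <;> simp) j hji hjk
  have h2 := hIC i k hik ![1, -1] (by intro m; fin_cases m <;> simp) j hji hjk
  rw [hM, hja, hjb] at h1 h2
  have hv1 : ![a, b] ⬝ᵥ ((1 - c * c)⁻¹ • !![(1:ℝ), -c; -c, 1]).mulVec ![1, 1]
      = (a + b) / (1 + c) := by
    simp [Matrix.mulVec, dotProduct, Fin.sum_univ_two]
    field_simp [h1c, h1c', hdet', (by rw [sq]; exact hdet' : (1:ℝ) - c ^ 2 ≠ 0)]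
    ring
  have hv2 : ![a, b] ⬝ᵥ ((1 - c * c)⁻¹ • !![(1:ℝ), -c; -c, 1]).mulVec ![1, -1]
      = (a - b) / (1 - c) := by
    simp [Matrix.mulVec, dotProduct, Fin.sum_univ_two]
    field_simp [h1c, h1c', hdet', (by rw [sq]; exact hdet' : (1:ℝ) - c ^ 2 ≠ 0)]
    ring
  rw [hv1] at h1
  rw [hv2] at h2
  have hp : |a + b| ≤ (1 - θ) * (1 + c) := by
    rw [abs_div, abs_of_pos (by linarith : (0:ℝ) < 1 + c),
      div_le_iff₀ (by linarith : (0:ℝ) < 1 + c)] at h1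
    exact h1
  have hm : |a - b| ≤ (1 - θ) * (1 - c) := by
    rw [abs_div, abs_of_pos (by linarith : (0:ℝ) < 1 - c),
      div_le_iff₀ (by linarith : (0:ℝ) < 1 - c)] at h2
    exact h2
  have hmax : max |a + b| |a - b| ≤ (1 - θ) * (1 + |c|) := by
    have h3 := le_abs_self c
    have h4 := neg_abs_le c
    exact max_le (by nlinarith) (by nlinarith)
  have hr1' : (0:ℝ) < 1 + r := by linarith
  have hC : (0:ℝ) ≤ 1 / (1 - θ) * ((1 - r) / (1 + r)) :=
    mul_nonneg (le_of_lt (div_pos one_pos hθ')) (div_nonneg (by linarith) (by linarith))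
  have key : 1 / (1 - θ) * ((1 - r) / (1 + r)) * max |a + b| |a - b|
      ≤ (1 - r) / (1 + r) * (1 + |c|) := by
    calc 1 / (1 - θ) * ((1 - r) / (1 + r)) * max |a + b| |a - b|
        ≤ 1 / (1 - θ) * ((1 - r) / (1 + r)) * ((1 - θ) * (1 + |c|)) :=
          mul_le_mul_of_nonneg_left hmax hC
      _ = (1 - r) / (1 + r) * (1 + |c|) := by field_simp
  have hfin : (1 - r) / (1 + r) * (1 + |c|) + |c| < 1 := by
    rw [div_mul_eq_mul_div, div_add' _ _ _ (ne_of_gt hr1'), div_lt_one hr1']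
    nlinarith [abs_nonneg c]
  rw [hdiag]
  linarith
end

section
/- Let C = XᵀX/n be the sample covariance of a design matrix X ∈ ℝ^{n×p} with columns standardized so that C_ii = 1. Suppose min over all index sets π with |π| ≤ s of λ_min(C_{π,π}) ≥ μ > 0, and suppose C is restricted diagonally dominant with sparsity s+1 and constant C₀ ≥ ρ, where ρ > √s/μ. Then for every S with |S| = s and every sign vector σ ∈ {−1,1}^S, ‖C_{S^c,S}(C_{S,S})^{−1}σ‖_∞ < 1 (the irrepresentable condition holds). -/
open Finset Matrix

/-- Auxiliary: from the eigenvalue lower bound on 2×2 principal submatrices,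
off diagonal entries are bounded by `1 - μ`. -/
lemma pair_bound {p s : ℕ} (C : Matrix (Fin p) (Fin p) ℝ) (μ : ℝ)
    (hsym : ∀ a b, C a b = C b a) (hdiag : ∀ i, C i i = 1)
    (hRiesz : ∀ π : Finset (Fin p), π.card ≤ s →
      ∀ v : π → ℝ, μ * ∑ i, v i ^ 2 ≤ v ⬝ᵥ (C.submatrix (Subtype.val) (Subtype.val)).mulVec v)
    (hs : 2 ≤ s) (i j : Fin p) (hij : i ≠ j) : |C i j| ≤ 1 - μ := by
  have main : ∀ e : ℝ, e ^ 2 = 1 → μ * 2 ≤ 2 + 2 * e * C i j := by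
    intro e he
    have hcard : ({i, j} : Finset (Fin p)).card ≤ s := by
      rw [Finset.card_pair hij]; exact hs
    set vv : Fin p → ℝ := fun x => if x = i then 1 else e with hvv
    have h := hRiesz {i, j} hcard (fun x => vv ↑x)
    simp only [dotProduct, mulVec, submatrix_apply] at h
    rw [Finset.sum_coe_sort ({i, j} : Finset (Fin p)) (fun z => vv z ^ 2)] at h
    have houter : (∑ x : ({i, j} : Finset (Fin p)), vv ↑x *
        ∑ y : ({i, j} : Finset (Fin p)), C ↑x ↑y * vv ↑y)
        = ∑ x ∈ ({i, j} : Finset (Fin p)), vv x * ∑ y ∈ ({i, j} : Finset (Fin p)), C x y * vv y := by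
      have hstep : (∑ x : ({i, j} : Finset (Fin p)), vv ↑x *
          ∑ y : ({i, j} : Finset (Fin p)), C ↑x ↑y * vv ↑y)
          = ∑ x : ({i, j} : Finset (Fin p)), vv ↑x * ∑ y ∈ ({i, j} : Finset (Fin p)), C ↑x y * vv y :=
        Finset.sum_congr rfl fun x _ => by
          rw [Finset.sum_coe_sort ({i, j} : Finset (Fin p)) (fun z => C ↑x z * vv z)]
      rw [hstep,
        Finset.sum_coe_sort ({i, j} : Finset (Fin p))
          (fun z => vv z * ∑ y ∈ ({i, j} : Finset (Fin p)), C z y * vv y)]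
    rw [houter] at h
    simp only [Finset.sum_pair hij] at h
    have hvi : vv i = 1 := by simp [hvv]
    have hvj : vv j = e := by simp only [hvv]; rw [if_neg (Ne.symm hij)]
    rw [hvi, hvj, hdiag i, hdiag j, hsym j i, he] at h
    nlinarith [h, he]
  have h1 := main 1 (by norm_num)
  have h2 := main (-1) (by norm_num)
  rw [abs_le]; constructor <;> linarith

/-- `|x| + |y| ≤ |x + y| + |x - y|`. -/
lemma abs_add_abs_le {x y : ℝ} : |x| + |y| ≤ |x + y| + |x - y| := by
  have h1 : |2 * x| ≤ |x + y| + |x - y| := by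
    have := abs_add_le (x + y) (x - y)
    have h : (x + y) + (x - y) = 2 * x := by ring
    rw [h] at this; exact this
  have h2 : |2 * y| ≤ |x + y| + |x - y| := by
    have := abs_sub (x + y) (x - y)
    have h : (x + y) - (x - y) = 2 * y := by ring
    rw [h] at this; exact this
  have hx : |2 * x| = 2 * |x| := by rw [abs_mul]; norm_num
  have hy : |2 * y| = 2 * |y| := by rw [abs_mul]; norm_num
  rw [hx] at h1; rw [hy] at h2; linarith

/-- Auxiliary arithmetic: from `M ≤ 1 + r * M` and `T + r < 1` conclude `T * M < 1`. -/
lemma final_bound {T M r : ℝ} (hT0 : 0 ≤ T) (hM0 : 0 ≤ M) (hr0 : 0 ≤ r)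
    (hM1 : M ≤ 1 + r * M) (key : T + r < 1) : T * M < 1 := by
  nlinarith [mul_nonneg hT0 hM0, mul_le_mul_of_nonneg_left hM1 hT0]

set_option maxHeartbeats 1000000 in
theorem stmt8 {n p s : ℕ} (X : Matrix (Fin n) (Fin p) ℝ) (C : Matrix (Fin p) (Fin p) ℝ)
    (hC : C = (n : ℝ)⁻¹ • (Xᵀ * X)) (hdiag : ∀ i, C i i = 1)
    (μ ρ C₀ : ℝ) (hμ : 0 < μ)
    (hRiesz : ∀ π : Finset (Fin p), π.card ≤ s →
      ∀ v : π → ℝ, μ * ∑ i, v i ^ 2 ≤ v ⬝ᵥ (C.submatrix (Subtype.val) (Subtype.val)).mulVec v)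
    (hρ : Real.sqrt s / μ < ρ) (hC₀ : ρ ≤ C₀) (hRDD : IsRDD C (s + 1) C₀) :
    ∀ S : Finset (Fin p), S.card = s →
      ∀ σ : S → ℝ, (∀ m, σ m = 1 ∨ σ m = -1) →
        ∀ k : Fin p, k ∉ S →
          |(fun j : S => C k j) ⬝ᵥ
            (C.submatrix (Subtype.val : S → Fin p) (Subtype.val : S → Fin p))⁻¹.mulVec σ|
            < 1 := by
  intro S hS σ hσ k hk
  have hCsym : ∀ a b : Fin p, C a b = C b a := by
    intro a b
    rw [hC]
    simp only [Matrix.smul_apply, Matrix.mul_apply, Matrix.transpose_apply, smul_eq_mul]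
    congr 1
    exact Finset.sum_congr rfl fun l _ => mul_comm _ _
  have hρ0 : 0 < ρ := lt_of_le_of_lt (div_nonneg (Real.sqrt_nonneg _) hμ.le) hρ
  rcases Nat.eq_zero_or_pos s with hs0 | hs1
  · -- s = 0 : S is empty
    have hSe : S = ∅ := Finset.card_eq_zero.mp (by rw [hS, hs0])
    haveI : IsEmpty (↥S) := Finset.isEmpty_coe_sort.mpr hSe
    simp [dotProduct]
  · -- s ≥ 1
    set A := C.submatrix (Subtype.val : S → Fin p) (Subtype.val : S → Fin p) with hA
    -- A is invertible
    have hdet : IsUnit A.det := by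
      rw [isUnit_iff_ne_zero]
      intro h0
      obtain ⟨w, hw0, hw⟩ := Matrix.exists_mulVec_eq_zero_iff.mpr h0
      have h := hRiesz S (le_of_eq hS) w
      rw [hw, dotProduct_zero] at h
      obtain ⟨i, hi⟩ := Function.ne_iff.mp hw0
      have hpos : 0 < ∑ i, w i ^ 2 :=
        Finset.sum_pos' (fun i _ => sq_nonneg _) ⟨i, Finset.mem_univ i, lt_of_le_of_ne (sq_nonneg _) (Ne.symm (pow_ne_zero 2 hi))⟩
      nlinarith
    set v : S → ℝ := A⁻¹.mulVec σ with hv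
    have hAv : A.mulVec v = σ := by
      rw [hv, Matrix.mulVec_mulVec, Matrix.mul_nonsing_inv _ hdet, Matrix.one_mulVec]
    -- the maximizer of |v|
    have hSne : S.Nonempty := Finset.card_pos.mp (by rw [hS]; exact hs1)
    haveI : Nonempty (↥S) := ⟨⟨hSne.choose, hSne.choose_spec⟩⟩
    obtain ⟨m₀, _, hm₀⟩ := Finset.exists_max_image (Finset.univ : Finset ↥S) (fun j => |v j|)
      Finset.univ_nonempty
    set M := |v m₀| with hM
    have hM0 : 0 ≤ M := abs_nonneg _
    set I := S.erase (↑m₀ : Fin p) with hI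
    set T := ∑ j ∈ S, |C k j| with hT
    set r := ∑ j ∈ I, |C (↑m₀ : Fin p) j| with hr
    set TK := ∑ j ∈ I, |C k j| with hTK
    have hT0 : 0 ≤ T := Finset.sum_nonneg fun _ _ => abs_nonneg _
    have hr0 : 0 ≤ r := Finset.sum_nonneg fun _ _ => abs_nonneg _
    have hm₀S : (↑m₀ : Fin p) ∈ S := m₀.2
    have hTsplit : |C k ↑m₀| + TK = T := Finset.add_sum_erase S (fun j => |C k j|) hm₀S
    have hkm₀ : k ≠ (↑m₀ : Fin p) := fun h => hk (h ▸ hm₀S)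
    -- RDD instance
    have hIcard : I.card ≤ (s + 1) - 1 := by
      rw [hI, Finset.card_erase_of_mem hm₀S, hS]; omega
    have hrdd := hRDD I hIcard (↑m₀) k (Finset.notMem_erase _ _)
      (fun h => hk (Finset.mem_of_mem_erase h)) hkm₀
    rw [hdiag] at hrdd
    set P := ∑ j ∈ I, |C (↑m₀ : Fin p) j + C k j| with hP
    set Q := ∑ j ∈ I, |C (↑m₀ : Fin p) j - C k j| with hQ
    have hP0 : 0 ≤ P := Finset.sum_nonneg fun _ _ => abs_nonneg _
    have hmax0 : 0 ≤ max P Q := le_trans hP0 (le_max_left _ _)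
    have hrTK : r + TK ≤ P + Q := by
      rw [hr, hTK, hP, hQ, ← Finset.sum_add_distrib, ← Finset.sum_add_distrib]
      exact Finset.sum_le_sum fun j _ => abs_add_abs_le
    have hPQmax : P + Q ≤ 2 * max P Q := by
      have := le_max_left P Q
      have := le_max_right P Q
      linarith
    -- key claim : T + r < 1
    have key : T + r < 1 := by
      have habsk : |C k ↑m₀| = |C (↑m₀ : Fin p) k| := by rw [hCsym]
      by_cases hρ2 : 2 ≤ ρ
      · -- route A
        have h2max : 2 * max P Q ≤ C₀ * max P Q :=
          mul_le_mul_of_nonneg_right (by linarith) hmax0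
        linarith
      · -- route B : ρ < 2
        push_neg at hρ2
        rcases eq_or_lt_of_le (show 1 ≤ s from hs1) with hs1' | hs2
        · -- s = 1
          have hI0 : I = ∅ := by
            rw [← Finset.card_eq_zero, hI, Finset.card_erase_of_mem hm₀S, hS, ← hs1']
          have hr0' : r = 0 := by rw [hr, hI0, Finset.sum_empty]
          have hTK0 : TK = 0 := by rw [hTK, hI0, Finset.sum_empty]
          have hP0' : P = 0 := by rw [hP, hI0, Finset.sum_empty]
          have hQ0' : Q = 0 := by rw [hQ, hI0, Finset.sum_empty]
          rw [hP0', hQ0'] at hrdd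
          simp only [max_self, mul_zero, zero_add] at hrdd
          linarith
        · -- 2 ≤ s
          have hs2' : 2 ≤ s := hs2
          have hpair := pair_bound C μ hCsym hdiag hRiesz hs2'
          have hμ1 : μ ≤ 1 := by
            have h1 := hpair k ↑m₀ hkm₀
            have h2 := abs_nonneg (C k ↑m₀)
            linarith
          have hsqrtlt : Real.sqrt s < 2 * μ := by
            rw [div_lt_iff₀ hμ] at hρ
            nlinarith
          have hs4 : (s : ℝ) < 4 := by
            nlinarith [Real.sqrt_nonneg (s : ℝ),
              Real.sq_sqrt (show (0:ℝ) ≤ (s:ℝ) by positivity)]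
          have hs3 : s ≤ 3 := by exact_mod_cast Nat.lt_succ_iff.mp (by exact_mod_cast hs4)
          have hTle : T ≤ (s : ℝ) * (1 - μ) := by
            have := Finset.sum_le_card_nsmul S (fun j => |C k j|) (1 - μ)
              (fun j hj => hpair k j (fun h => hk (h ▸ hj)))
            rwa [hS, nsmul_eq_mul] at this
          have hrle : r ≤ ((s : ℝ) - 1) * (1 - μ) := by
            have h1 := Finset.sum_le_card_nsmul I (fun j => |C (↑m₀ : Fin p) j|) (1 - μ)
              (fun j hj => hpair ↑m₀ j (Ne.symm (Finset.ne_of_mem_erase hj)))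
            rw [hI, Finset.card_erase_of_mem hm₀S, hS, nsmul_eq_mul] at h1
            have hcast : ((s - 1 : ℕ) : ℝ) = (s : ℝ) - 1 := by
              have : 1 ≤ s := hs1
              push_cast [this]; ring
            rw [hcast] at h1
            exact h1
          interval_cases s
          · -- s = 2
            have hsq : (4/3 : ℝ) < Real.sqrt 2 := by
              rw [show (4/3:ℝ) = Real.sqrt ((4/3)^2) from (Real.sqrt_sq (by norm_num)).symm]
              exact Real.sqrt_lt_sqrt (by positivity) (by norm_num)
            have h2 : Real.sqrt ((2:ℕ):ℝ) = Real.sqrt 2 := by norm_num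
            rw [h2] at hsqrtlt
            push_cast at hTle hrle
            nlinarith
          · -- s = 3
            have hsq : (8/5 : ℝ) < Real.sqrt 3 := by
              rw [show (8/5:ℝ) = Real.sqrt ((8/5)^2) from (Real.sqrt_sq (by norm_num)).symm]
              exact Real.sqrt_lt_sqrt (by positivity) (by norm_num)
            have h3 : Real.sqrt ((3:ℕ):ℝ) = Real.sqrt 3 := by norm_num
            rw [h3] at hsqrtlt
            push_cast at hTle hrle
            nlinarith
    -- bound M ≤ 1 + r * M
    have hσm : |σ m₀| = 1 := by rcases hσ m₀ with h | h <;> rw [h] <;> norm_num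
    have hsum_r : ∑ j ∈ (Finset.univ : Finset ↥S).erase m₀, |C (↑m₀ : Fin p) ↑j| = r := by
      have h1 : |C (↑m₀ : Fin p) ↑m₀| + ∑ j ∈ (Finset.univ : Finset ↥S).erase m₀,
          |C (↑m₀ : Fin p) ↑j| = ∑ j : ↥S, |C (↑m₀ : Fin p) ↑j| :=
        Finset.add_sum_erase _ (fun j : ↥S => |C (↑m₀ : Fin p) ↑j|) (Finset.mem_univ m₀)
      have h2 : ∑ j : ↥S, |C (↑m₀ : Fin p) ↑j| = ∑ j ∈ S, |C (↑m₀ : Fin p) j| :=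
        Finset.sum_coe_sort S (fun z => |C (↑m₀ : Fin p) z|)
      have h3 : |C (↑m₀ : Fin p) ↑m₀| + ∑ j ∈ S.erase ↑m₀, |C (↑m₀ : Fin p) j|
          = ∑ j ∈ S, |C (↑m₀ : Fin p) j| :=
        Finset.add_sum_erase S (fun z => |C (↑m₀ : Fin p) z|) hm₀S
      rw [hr, hI]; linarith
    have hM1 : M ≤ 1 + r * M := by
      have h4 : ∑ j : ↥S, A m₀ j * v j = σ m₀ := by
        have := congrFun hAv m₀
        simpa [Matrix.mulVec, dotProduct] using this
      have h5 : A m₀ m₀ * v m₀ + ∑ j ∈ (Finset.univ : Finset ↥S).erase m₀, A m₀ j * v j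
          = ∑ j : ↥S, A m₀ j * v j :=
        Finset.add_sum_erase _ (fun j => A m₀ j * v j) (Finset.mem_univ m₀)
      have hd : A m₀ m₀ = 1 := by rw [hA]; exact hdiag _
      have hE : v m₀ = σ m₀ - ∑ j ∈ (Finset.univ : Finset ↥S).erase m₀, A m₀ j * v j := by
        rw [hd] at h5; rw [h4] at h5; linarith
      have hEb : |∑ j ∈ (Finset.univ : Finset ↥S).erase m₀, A m₀ j * v j| ≤ r * M := by
        calc |∑ j ∈ (Finset.univ : Finset ↥S).erase m₀, A m₀ j * v j|
            ≤ ∑ j ∈ (Finset.univ : Finset ↥S).erase m₀, |A m₀ j * v j| :=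
              Finset.abs_sum_le_sum_abs _ _
          _ = ∑ j ∈ (Finset.univ : Finset ↥S).erase m₀, |A m₀ j| * |v j| := by
              simp [abs_mul]
          _ ≤ ∑ j ∈ (Finset.univ : Finset ↥S).erase m₀, |A m₀ j| * M :=
              Finset.sum_le_sum fun j _ =>
                mul_le_mul_of_nonneg_left (hm₀ j (Finset.mem_univ j)) (abs_nonneg _)
          _ = (∑ j ∈ (Finset.univ : Finset ↥S).erase m₀, |A m₀ j|) * M := by
              rw [Finset.sum_mul]
          _ = r * M := by rw [← hsum_r]; rfl
      calc M = |v m₀| := hM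
        _ = |σ m₀ - ∑ j ∈ (Finset.univ : Finset ↥S).erase m₀, A m₀ j * v j| := by rw [hE]
        _ ≤ |σ m₀| + |∑ j ∈ (Finset.univ : Finset ↥S).erase m₀, A m₀ j * v j| := abs_sub _ _
        _ ≤ 1 + r * M := by rw [hσm]; exact add_le_add_right hEb 1
    -- final assembly
    have hfinal : |(fun j : S => C k ↑j) ⬝ᵥ v| ≤ T * M := by
      calc |(fun j : S => C k ↑j) ⬝ᵥ v| = |∑ j : ↥S, C k ↑j * v j| := by
            simp [dotProduct]
        _ ≤ ∑ j : ↥S, |C k ↑j * v j| := Finset.abs_sum_le_sum_abs _ _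
        _ = ∑ j : ↥S, |C k ↑j| * |v j| := by simp [abs_mul]
        _ ≤ ∑ j : ↥S, |C k ↑j| * M :=
            Finset.sum_le_sum fun j _ =>
              mul_le_mul_of_nonneg_left (hm₀ j (Finset.mem_univ j)) (abs_nonneg _)
        _ = (∑ j : ↥S, |C k ↑j|) * M := by rw [Finset.sum_mul]
        _ = T * M := by rw [hT, Finset.sum_coe_sort S (fun z => |C k z|)]
    exact lt_of_le_of_lt hfinal (final_bound hT0 hM0 hr0 hM1 key)
end
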